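/- Let f = x₁·(x₁² − x₂² − x₃² − x₄²) ∈ ℝ[x₁,x₂,x₃,x₄]. Then the rank of f over ℝ is exactly 7, and the Waring rank of f over ℝ is exactly 7. -/

import Mathlib

/-!
Writing `x₀(x₀² - x₁² - x₂² - x₃²) = 2x₀³ - (1/6) ∑ₘ ((x₀ + xₘ)³ + (x₀ - xₘ)³)` bounds both ranks
by seven. A symmetric tensor is recovered from its cubic form by polarization, so both lower
bounds reduce to the tensor `T` of this Waring decomposition having no decomposition into six
rank-one terms `uₛ ⊗ vₛ ⊗ wₛ`.

Contracting `T` with `t` in its first slot gives a matrix `M(t)` with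
`det M(t) = -t₀²(3t₀² + t₁² + t₂² + t₃²)/81`. Given six rank-one terms, choose two indices `a, b`
and a line `t = p + y q` with `p₀ = 1`, `q₀ = 0`, `q₁ = 1` on which `⟪t, u_a⟫` and `⟪t, u_b⟫`
vanish. Along it `M(t)` is a sum of four rank-one matrices with coefficients affine in `y`, so
`det M(t)` is a constant times a product of four affine functions of `y`: it either vanishes
somewhere or is constant. But `det M(p + y q)` is negative everywhere and not constant.
-/

/-- A tensor of format `n × n × n` is symmetric if its entries are unchanged under
every permutation of the three indices. -/
def IsSymTensor {K : Type*} [Field K] {n : ℕ} (T : Fin n → Fin n → Fin n → K) : Prop :=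
  ∀ (σ : Equiv.Perm (Fin 3)) (v : Fin 3 → Fin n),
    T (v (σ 0)) (v (σ 1)) (v (σ 2)) = T (v 0) (v 1) (v 2)

/-- The rank of an `n × n × n` tensor over `K`: the least `r` admitting a decomposition
into `r` rank-one terms. -/
noncomputable def tensorRank {K : Type*} [Field K] {n : ℕ}
    (T : Fin n → Fin n → Fin n → K) : ℕ :=
  sInf {r : ℕ | ∃ u v w : Fin r → Fin n → K,
    ∀ i j k, T i j k = ∑ s, u s i * v s j * w s k}

/-- The symmetric rank of an `n × n × n` tensor over `K`. -/
noncomputable def symTensorRank {K : Type*} [Field K] {n : ℕ}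
    (T : Fin n → Fin n → Fin n → K) : ℕ :=
  sInf {r : ℕ | ∃ (lam : Fin r → K) (u : Fin r → Fin n → K),
    ∀ i j k, T i j k = ∑ s, lam s * (u s i * u s j * u s k)}

open MvPolynomial in
/-- The Waring rank over `ℝ` of a polynomial in four variables: the least `r` such that
`f` is a linear combination of `r` cubes of linear forms. -/
noncomputable def waringRank (f : MvPolynomial (Fin 4) ℝ) : ℕ :=
  sInf {r : ℕ | ∃ (lam : Fin r → ℝ) (l : Fin r → Fin 4 → ℝ),
    f = ∑ s, C (lam s) * (∑ i, C (l s i) * X i) ^ 3}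

open MvPolynomial in
/-- The rank over `ℝ` of a cubic `f`: the tensor rank of the unique symmetric
`4 × 4 × 4` tensor `T` with `f = ∑ T i j k · xᵢ xⱼ xₖ`. -/
noncomputable def cubicRank (f : MvPolynomial (Fin 4) ℝ) : ℕ :=
  sInf {r : ℕ | ∃ T : Fin 4 → Fin 4 → Fin 4 → ℝ, IsSymTensor T ∧
    f = (∑ i, ∑ j, ∑ k, C (T i j k) * X i * X j * X k) ∧ tensorRank T ≤ r}

open Finset Matrix MvPolynomial

section CommRing

variable {K : Type*} [CommRing K] {n : ℕ}

def HasDecomposition (T : Fin n → Fin n → Fin n → K) (r : ℕ) : Prop :=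
  ∃ u v w : Fin r → Fin n → K, ∀ i j k, T i j k = ∑ s, u s i * v s j * w s k

lemma HasDecomposition.mono {T : Fin n → Fin n → Fin n → K} {r r' : ℕ}
    (hT : HasDecomposition T r) (hr : r ≤ r') : HasDecomposition T r' := by
  obtain ⟨d, rfl⟩ := Nat.exists_eq_add_of_le hr
  obtain ⟨u, v, w, huvw⟩ := hT
  refine ⟨Fin.append u 0, Fin.append v 0, Fin.append w 0, fun i j k => ?_⟩
  simp [huvw, Fin.sum_univ_add]

def cubicForm (T : Fin n → Fin n → Fin n → K) (x : Fin n → K) : K :=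
  ∑ i, ∑ j, ∑ k, T i j k * x i * x j * x k

lemma eval_sum_C_mul_X_mul_X_mul_X (T : Fin n → Fin n → Fin n → K) (x : Fin n → K) :
    eval x (∑ i, ∑ j, ∑ k, C (T i j k) * X i * X j * X k) = cubicForm T x := by
  simp [cubicForm]

lemma cubicForm_eq_eval {T : Fin n → Fin n → Fin n → K} {f : MvPolynomial (Fin n) K}
    (hf : f = ∑ i, ∑ j, ∑ k, C (T i j k) * X i * X j * X k) :
    cubicForm T = fun x => eval x f :=
  funext fun x => by rw [hf, eval_sum_C_mul_X_mul_X_mul_X]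

def cubicPolarization {V : Type*} [Add V] (F : V → K) (a b c : V) : K :=
  F (a + b + c) - F (a + b) - F (a + c) - F (b + c) + F a + F b + F c

lemma cubicPolarization_cubicForm (T : Fin n → Fin n → Fin n → K) (a b c : Fin n → K) :
    cubicPolarization (cubicForm T) a b c =
      ∑ i, ∑ j, ∑ k, T i j k * (a i * b j * c k + a i * c j * b k + b i * a j * c k
        + b i * c j * a k + c i * a j * b k + c i * b j * a k) := by
  simp only [cubicPolarization, cubicForm, ← Finset.sum_add_distrib, ← Finset.sum_sub_distrib]
  exact Finset.sum_congr rfl fun i _ => Finset.sum_congr rfl fun j _ =>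
    Finset.sum_congr rfl fun k _ => by simp only [Pi.add_apply]; ring

def waringTensor {r : ℕ} (lam : Fin r → K) (l : Fin r → Fin n → K) :
    Fin n → Fin n → Fin n → K :=
  fun i j k => ∑ s, lam s * (l s i * l s j * l s k)

lemma hasDecomposition_waringTensor {r : ℕ} (lam : Fin r → K) (l : Fin r → Fin n → K) :
    HasDecomposition (waringTensor lam l) r :=
  ⟨fun s i => lam s * l s i, l, l, fun i j k => by simp only [waringTensor, mul_assoc]⟩

lemma cubicForm_waringTensor {r : ℕ} (lam : Fin r → K) (l : Fin r → Fin n → K)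
    (x : Fin n → K) : cubicForm (waringTensor lam l) x = ∑ s, lam s * (l s ⬝ᵥ x) ^ 3 := by
  have hcube : ∀ s, lam s * (l s ⬝ᵥ x) ^ 3 =
      ∑ i, ∑ j, ∑ k, lam s * (l s i * l s j * l s k) * x i * x j * x k := by
    intro s
    rw [pow_three', dotProduct]
    simp only [Finset.sum_mul, Finset.mul_sum]
    exact Finset.sum_congr rfl fun i _ => Finset.sum_congr rfl fun j _ =>
      Finset.sum_congr rfl fun k _ => by ring
  simp only [hcube, cubicForm, waringTensor, Finset.sum_mul]
  symm
  rw [Finset.sum_comm]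
  refine Finset.sum_congr rfl fun i _ => ?_
  rw [Finset.sum_comm]
  refine Finset.sum_congr rfl fun j _ => ?_
  rw [Finset.sum_comm]

lemma eval_sum_C_mul_pow_three {r : ℕ} (lam : Fin r → K) (l : Fin r → Fin n → K)
    (x : Fin n → K) :
    eval x (∑ s, C (lam s) * (∑ i, C (l s i) * X i) ^ 3) = ∑ s, lam s * (l s ⬝ᵥ x) ^ 3 := by
  simp [dotProduct]

lemma mul_mul_perm_three {M : Type*} [CommMonoid M] (σ : Equiv.Perm (Fin 3)) (g : Fin 3 → M) :
    g (σ 0) * g (σ 1) * g (σ 2) = g 0 * g 1 * g 2 := by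
  simpa [Fin.prod_univ_three] using Equiv.prod_comp σ g

def slicePencil (T : Fin n → Fin n → Fin n → K) (t : Fin n → K) : Matrix (Fin n) (Fin n) K :=
  of fun j k => ∑ i, t i * T i j k

lemma slicePencil_eq_sum_smul_vecMulVec {r : ℕ} {T : Fin n → Fin n → Fin n → K}
    {u v w : Fin r → Fin n → K} (huvw : ∀ i j k, T i j k = ∑ s, u s i * v s j * w s k)
    (t : Fin n → K) : slicePencil T t = ∑ s, (t ⬝ᵥ u s) • vecMulVec (v s) (w s) := by
  ext j k
  simp only [slicePencil, of_apply, huvw, Finset.mul_sum, Matrix.sum_apply, Matrix.smul_apply,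
    vecMulVec_apply, dotProduct, Finset.sum_mul, smul_eq_mul]
  rw [Finset.sum_comm]
  exact Finset.sum_congr rfl fun s _ => Finset.sum_congr rfl fun i _ => by ring

lemma det_sum_smul_vecMulVec {m : ℕ} (c : Fin m → K) (v w : Fin m → Fin m → K) :
    det (∑ s, c s • vecMulVec (v s) (w s)) = det (of v) * (∏ s, c s) * det (of w) := by
  have h : ∑ s, c s • vecMulVec (v s) (w s) = (of v)ᵀ * diagonal c * of w := by
    ext j k
    simp only [Matrix.sum_apply, Matrix.smul_apply, vecMulVec_apply, smul_eq_mul, diagonal,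
      Matrix.mul_apply, transpose_apply, of_apply, mul_ite, mul_zero, sum_ite_eq', mem_univ,
      ↓reduceIte]
    exact Finset.sum_congr rfl fun s _ => by ring
  rw [h, det_mul, det_mul, det_transpose, det_diagonal]

end CommRing

lemma Fin.exists_sum_eq_sum_comp_of_eq_zero {M : Type*} [AddCommMonoid M] {m : ℕ}
    {a b : Fin (m + 2)} (hab : a ≠ b) : ∃ e : Fin m → Fin (m + 2),
      ∀ F : Fin (m + 2) → M, F a = 0 → F b = 0 → ∑ s, F s = ∑ i, F (e i) := by
  obtain ⟨b', rfl⟩ := Fin.exists_succAbove_eq hab.symm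
  refine ⟨fun i => a.succAbove (b'.succAbove i), fun F ha hb => ?_⟩
  rw [Fin.sum_univ_succAbove _ a, Fin.sum_univ_succAbove _ b', ha, hb, zero_add, zero_add]

section Field

variable {K : Type*} [Field K] {n : ℕ}

lemma eq_prod_of_prod_add_mul_ne_zero {ι : Type*} [Fintype ι] (A B : ι → K)
    (h : ∀ y, ∏ i, (A i + y * B i) ≠ 0) (y : K) : ∏ i, (A i + y * B i) = ∏ i, A i := by
  have hB : ∀ i, B i = 0 := by
    intro i
    by_contra hBi
    apply h (-A i / B i)
    exact Finset.prod_eq_zero (Finset.mem_univ i) (by field_simp; ring)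
  simp [hB]

lemma exists_mul_sub_mul_ne_zero {ι : Type*} (x y : ι → K)
    (h : ∀ α β, (∀ s, α * x s + β * y s = 0) → α = 0 ∧ β = 0) :
    ∃ a b, x a * y b - y a * x b ≠ 0 := by
  by_contra! H
  by_cases hy : ∀ s, y s = 0
  · exact one_ne_zero (h 0 1 fun s => by simp [hy]).2
  · obtain ⟨a, ha⟩ := not_forall.mp hy
    exact ha (h (y a) (-x a) fun s => by linear_combination -H a s).1

lemma exists_coords_dotProduct_eq_zero {x y : Fin 4 → K}
    (hxy : x 2 * y 3 - x 3 * y 2 ≠ 0) (c₀ c₁ : K) :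
    ∃ t : Fin 4 → K, t 0 = c₀ ∧ t 1 = c₁ ∧ t ⬝ᵥ x = 0 ∧ t ⬝ᵥ y = 0 := by
  refine ⟨![c₀, c₁,
    ((c₀ * y 0 + c₁ * y 1) * x 3 - (c₀ * x 0 + c₁ * x 1) * y 3) / (x 2 * y 3 - x 3 * y 2),
    ((c₀ * x 0 + c₁ * x 1) * y 2 - (c₀ * y 0 + c₁ * y 1) * x 2) / (x 2 * y 3 - x 3 * y 2)],
    rfl, rfl, ?_, ?_⟩
  · simp only [dotProduct, Fin.sum_univ_four, Matrix.cons_val]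
    linear_combination -(c₀ * x 0 + c₁ * x 1) * mul_inv_cancel₀ hxy
  · simp only [dotProduct, Fin.sum_univ_four, Matrix.cons_val]
    linear_combination -(c₀ * y 0 + c₁ * y 1) * mul_inv_cancel₀ hxy

variable {T : Fin n → Fin n → Fin n → K}

lemma HasDecomposition.tensorRank_le {r : ℕ} (hT : HasDecomposition T r) : tensorRank T ≤ r :=
  Nat.sInf_le hT

lemma isSymTensor_waringTensor {r : ℕ} (lam : Fin r → K) (l : Fin r → Fin n → K) :
    IsSymTensor (waringTensor lam l) := fun σ v =>
  Finset.sum_congr rfl fun s _ => by rw [mul_mul_perm_three σ fun m => l s (v m)]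

lemma IsSymTensor.apply_swap_left (hT : IsSymTensor T) (i j k : Fin n) : T j i k = T i j k := by
  simpa [Equiv.swap_apply_of_ne_of_ne] using hT (Equiv.swap 0 1) ![i, j, k]

lemma IsSymTensor.apply_swap_right (hT : IsSymTensor T) (i j k : Fin n) : T i k j = T i j k := by
  simpa [Equiv.swap_apply_of_ne_of_ne] using hT (Equiv.swap 1 2) ![i, j, k]

lemma IsSymTensor.six_mul_apply (hT : IsSymTensor T) (i j k : Fin n) :
    6 * T i j k =
      cubicPolarization (cubicForm T) (Pi.single i 1) (Pi.single j 1) (Pi.single k 1) := by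
  rw [cubicPolarization_cubicForm]
  simp only [Pi.single_apply, mul_ite, mul_one, mul_zero, mul_add, sum_add_distrib, sum_ite_eq',
    mem_univ, ↓reduceIte]
  linear_combination -2 * hT.apply_swap_right i j k - 3 * hT.apply_swap_left i j k
    - 2 * hT.apply_swap_right j i k - hT.apply_swap_left i k j - hT.apply_swap_left j k i

lemma IsSymTensor.eq_of_cubicForm_eq [CharZero K] {T' : Fin n → Fin n → Fin n → K}
    (hT : IsSymTensor T) (hT' : IsSymTensor T') (h : cubicForm T = cubicForm T') : T = T' := by
  funext i j k
  have h6 := hT.six_mul_apply i j k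
  rw [h, ← hT'.six_mul_apply] at h6
  exact mul_left_cancel₀ (by norm_num) h6

lemma hasDecomposition_of_eq_sum_C_mul_pow_three [CharZero K] {f : MvPolynomial (Fin n) K}
    (hT : IsSymTensor T) (hf : f = ∑ i, ∑ j, ∑ k, C (T i j k) * X i * X j * X k) {r : ℕ}
    {lam : Fin r → K} {l : Fin r → Fin n → K}
    (hw : f = ∑ s, C (lam s) * (∑ i, C (l s i) * X i) ^ 3) : HasDecomposition T r := by
  have hwT : waringTensor lam l = T := by
    refine (isSymTensor_waringTensor lam l).eq_of_cubicForm_eq hT ?_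
    rw [cubicForm_eq_eval hf]
    funext x
    rw [cubicForm_waringTensor, ← eval_sum_C_mul_pow_three, hw]
  exact hwT ▸ hasDecomposition_waringTensor lam l

end Field

lemma cubicRank_eq_tensorRank {T : Fin 4 → Fin 4 → Fin 4 → ℝ} {f : MvPolynomial (Fin 4) ℝ}
    (hT : IsSymTensor T) (hf : f = ∑ i, ∑ j, ∑ k, C (T i j k) * X i * X j * X k) :
    cubicRank f = tensorRank T := by
  rw [cubicRank, ← csInf_Ici (a := tensorRank T)]
  congr 1
  ext r
  refine ⟨fun ⟨T', hT', hf', hr⟩ => ?_, fun hr => ⟨T, hT, hf, hr⟩⟩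
  rwa [hT'.eq_of_cubicForm_eq hT (by rw [cubicForm_eq_eval hf, cubicForm_eq_eval hf'])] at hr

lemma tensorRank_le_waringRank {T : Fin 4 → Fin 4 → Fin 4 → ℝ} {f : MvPolynomial (Fin 4) ℝ}
    (hT : IsSymTensor T) (hf : f = ∑ i, ∑ j, ∑ k, C (T i j k) * X i * X j * X k) {r : ℕ}
    (lam : Fin r → ℝ) (l : Fin r → Fin 4 → ℝ)
    (hw : f = ∑ s, C (lam s) * (∑ i, C (l s i) * X i) ^ 3) : tensorRank T ≤ waringRank f :=
  le_csInf ⟨r, lam, l, hw⟩ fun _ ⟨_, _, hw'⟩ =>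
    (hasDecomposition_of_eq_sum_C_mul_pow_three hT hf hw').tensorRank_le

noncomputable def minkowskiCoeffs : Fin 7 → ℝ := ![2, -1/6, -1/6, -1/6, -1/6, -1/6, -1/6]

def minkowskiForms : Fin 7 → Fin 4 → ℝ :=
  ![![1, 0, 0, 0], ![1, 1, 0, 0], ![1, -1, 0, 0], ![1, 0, 1, 0], ![1, 0, -1, 0],
    ![1, 0, 0, 1], ![1, 0, 0, -1]]

noncomputable def minkowskiTensor : Fin 4 → Fin 4 → Fin 4 → ℝ :=
  waringTensor minkowskiCoeffs minkowskiForms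

lemma sum_minkowskiCoeffs_mul_pow_three (x : Fin 4 → ℝ) :
    ∑ s, minkowskiCoeffs s * (minkowskiForms s ⬝ᵥ x) ^ 3 =
      x 0 * (x 0 ^ 2 - x 1 ^ 2 - x 2 ^ 2 - x 3 ^ 2) := by
  simp only [Fin.sum_univ_seven, Fin.sum_univ_four, dotProduct, minkowskiCoeffs, minkowskiForms,
    Matrix.cons_val]
  ring

lemma minkowskiCubic_eq_sum_C_mul_pow_three :
    (X 0 * (X 0 ^ 2 - X 1 ^ 2 - X 2 ^ 2 - X 3 ^ 2) : MvPolynomial (Fin 4) ℝ) =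
      ∑ s, C (minkowskiCoeffs s) * (∑ i, C (minkowskiForms s i) * X i) ^ 3 :=
  MvPolynomial.funext fun x => by
    rw [eval_sum_C_mul_pow_three, sum_minkowskiCoeffs_mul_pow_three]
    simp

lemma minkowskiCubic_eq_sum_C_mul_X_mul_X_mul_X :
    (X 0 * (X 0 ^ 2 - X 1 ^ 2 - X 2 ^ 2 - X 3 ^ 2) : MvPolynomial (Fin 4) ℝ) =
      ∑ i, ∑ j, ∑ k, C (minkowskiTensor i j k) * X i * X j * X k :=
  MvPolynomial.funext fun x => by
    rw [eval_sum_C_mul_X_mul_X_mul_X, minkowskiTensor, cubicForm_waringTensor,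
      sum_minkowskiCoeffs_mul_pow_three]
    simp

lemma slicePencil_minkowskiTensor (t : Fin 4 → ℝ) :
    slicePencil minkowskiTensor t =
      !![t 0, -t 1 / 3, -t 2 / 3, -t 3 / 3;
         -t 1 / 3, -t 0 / 3, 0, 0;
         -t 2 / 3, 0, -t 0 / 3, 0;
         -t 3 / 3, 0, 0, -t 0 / 3] := by
  ext j k
  fin_cases j <;> fin_cases k <;>
    simp only [slicePencil, minkowskiTensor, waringTensor, minkowskiCoeffs, minkowskiForms,
      Fin.sum_univ_seven, Fin.sum_univ_four, of_apply, Matrix.cons_val, Fin.reduceFinMk,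
      Fin.zero_eta] <;>
    ring

lemma det_slicePencil_minkowskiTensor (t : Fin 4 → ℝ) :
    det (slicePencil minkowskiTensor t) =
      -(t 0 ^ 2 * (3 * t 0 ^ 2 + t 1 ^ 2 + t 2 ^ 2 + t 3 ^ 2)) / 81 := by
  rw [slicePencil_minkowskiTensor, det_succ_row_zero]
  simp only [Fin.sum_univ_four, det_fin_three, submatrix_apply, of_apply, Fin.succAbove,
    Fin.reduceSucc, Fin.reduceCastSucc, Fin.reduceLT, ↓reduceIte, Matrix.cons_val,
    Fin.coe_ofNat_eq_mod]
  ring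

lemma eq_zero_of_slicePencil_minkowskiTensor_eq_zero {t : Fin 4 → ℝ}
    (ht : slicePencil minkowskiTensor t = 0) : t = 0 := by
  rw [slicePencil_minkowskiTensor] at ht
  have h01 := congrFun (congrFun ht 0) 1
  have h02 := congrFun (congrFun ht 0) 2
  have h03 := congrFun (congrFun ht 0) 3
  have h11 := congrFun (congrFun ht 1) 1
  simp only [of_apply, Matrix.cons_val, Matrix.zero_apply, div_eq_zero_iff, neg_eq_zero,
    OfNat.ofNat_ne_zero, or_false] at h01 h02 h03 h11
  ext i; fin_cases i <;> simp [*]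

lemma minkowskiTensor_not_hasDecomposition_six : ¬ HasDecomposition minkowskiTensor 6 := by
  rintro ⟨u, v, w, huvw⟩
  have hpencil := slicePencil_eq_sum_smul_vecMulVec huvw
  -- The pencil determines `t`, so the vectors `(u s 2, u s 3)` span the plane.
  obtain ⟨a, b, hab⟩ : ∃ a b, u a 2 * u b 3 - u a 3 * u b 2 ≠ 0 := by
    refine exists_mul_sub_mul_ne_zero (fun s => u s 2) (fun s => u s 3) fun α β h => ?_
    have h0 := eq_zero_of_slicePencil_minkowskiTensor_eq_zero (t := ![0, 0, α, β]) (by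
      rw [hpencil]
      simp [dotProduct, Fin.sum_univ_four, h])
    exact ⟨congrFun h0 2, congrFun h0 3⟩
  obtain ⟨p, hp0, hp1, hpa, hpb⟩ := exists_coords_dotProduct_eq_zero hab 1 0
  obtain ⟨q, hq0, hq1, hqa, hqb⟩ := exists_coords_dotProduct_eq_zero hab 0 1
  obtain ⟨e, he⟩ := Fin.exists_sum_eq_sum_comp_of_eq_zero (M := Matrix (Fin 4) (Fin 4) ℝ)
    (m := 4) (show a ≠ b by rintro rfl; exact hab (by ring))
  set D : ℝ → ℝ := fun y => det (slicePencil minkowskiTensor (p + y • q))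
  have hD_prod : ∀ y, D y = det (of fun i => v (e i)) *
      (∏ i, (p ⬝ᵥ u (e i) + y * q ⬝ᵥ u (e i))) * det (of fun i => w (e i)) := by
    intro y
    simp only [D, hpencil, add_dotProduct, smul_dotProduct, smul_eq_mul]
    rw [he _ (by simp [hpa, hqa]) (by simp [hpb, hqb]), det_sum_smul_vecMulVec]
  have hD_quad : ∀ y, D y = -(3 + y ^ 2 + (p 2 + y * q 2) ^ 2 + (p 3 + y * q 3) ^ 2) / 81 := by
    intro y
    simp only [D, det_slicePencil_minkowskiTensor, Pi.add_apply, Pi.smul_apply, smul_eq_mul,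
      hp0, hp1, hq0, hq1]
    ring
  have hD_neg : ∀ y, D y < 0 := fun y => by
    rw [hD_quad]
    nlinarith [sq_nonneg y, sq_nonneg (p 2 + y * q 2), sq_nonneg (p 3 + y * q 3)]
  have hconst := eq_prod_of_prod_add_mul_ne_zero _ _ fun y hy => (hD_neg y).ne (by
    rw [hD_prod, hy]; ring)
  have h1 := hD_quad 1
  have hm1 := hD_quad (-1)
  have h0 := hD_quad 0
  -- `D` is constant, yet `D 1 + D (-1) - 2 * D 0 = -2 * (1 + q 2 ^ 2 + q 3 ^ 2) / 81`.
  rw [hD_prod, hconst] at h1 hm1 h0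
  nlinarith [sq_nonneg (q 2), sq_nonneg (q 3)]

lemma tensorRank_minkowskiTensor : tensorRank minkowskiTensor = 7 :=
  (Nat.sInf_upward_closed_eq_succ_iff (s := {r | HasDecomposition minkowskiTensor r})
    (fun _ _ h hr => HasDecomposition.mono hr h) 6).2
    ⟨hasDecomposition_waringTensor _ _, minkowskiTensor_not_hasDecomposition_six⟩

open MvPolynomial in
/-- The cubic surface `x₁(x₁² - x₂² - x₃² - x₄²)` has real rank seven and real Waring
rank seven. -/
theorem real_rank_of_minkowski_cubic :
    cubicRank (X 0 * (X 0 ^ 2 - X 1 ^ 2 - X 2 ^ 2 - X 3 ^ 2) : MvPolynomial (Fin 4) ℝ) = 7 ∧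
    waringRank (X 0 * (X 0 ^ 2 - X 1 ^ 2 - X 2 ^ 2 - X 3 ^ 2) : MvPolynomial (Fin 4) ℝ) = 7 := by
  have hsym : IsSymTensor minkowskiTensor := isSymTensor_waringTensor _ _
  have hT := minkowskiCubic_eq_sum_C_mul_X_mul_X_mul_X
  have hW := minkowskiCubic_eq_sum_C_mul_pow_three
  refine ⟨by rw [cubicRank_eq_tensorRank hsym hT, tensorRank_minkowskiTensor], ?_⟩
  refine le_antisymm (Nat.sInf_le ⟨_, _, hW⟩) ?_
  rw [← tensorRank_minkowskiTensor]
  exact tensorRank_le_waringRank hsym hT _ _ hW
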